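/- Let n ≥ 2, let ε₁, ε₂ be real numbers with ε₂ > ε₁ > 0, and let S ⊆ [0,1]^n. Suppose S contains an image x with some coordinate x_i satisfying x_i > ε₁/ε₂. Then there exists x̃ ∈ ℝ^n such that x̃ ∈ t_combined(S) but x̃ ∉ t_add(S) ∪ t_func(S); consequently t_combined(S) is a strict superset of t_add(S) ∪ t_func(S). -/

import Mathlib

/-- The additive threat model: perturb each coordinate of some `x ∈ S` by `δᵢ`,
where `‖δ‖_∞ ≤ ε₁` (the sup norm is the default norm on `Fin n → ℝ`). -/
def tAdd (n : ℕ) (ε₁ : ℝ) (S : Set (Fin n → ℝ)) : Set (Fin n → ℝ) :=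
  { y | ∃ x ∈ S, ∃ δ : Fin n → ℝ, ‖δ‖ ≤ ε₁ ∧ y = fun i => x i + δ i }

/-- The functional threat model: scale every coordinate of some `x ∈ S` by a
single `c ∈ [1 - ε₂, 1 + ε₂]`. -/
def tFunc (n : ℕ) (ε₂ : ℝ) (S : Set (Fin n → ℝ)) : Set (Fin n → ℝ) :=
  { y | ∃ x ∈ S, ∃ c ∈ Set.Icc (1 - ε₂) (1 + ε₂), y = fun i => c * x i }

/-- The combined threat model: scale by `c ∈ [1 - ε₂, 1 + ε₂]` and then perturb
each coordinate by `δᵢ` with `|δᵢ| ≤ ε₁`. -/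
def tCombined (n : ℕ) (ε₁ ε₂ : ℝ) (S : Set (Fin n → ℝ)) : Set (Fin n → ℝ) :=
  { y | ∃ x ∈ S, ∃ c ∈ Set.Icc (1 - ε₂) (1 + ε₂), ∃ δ : Fin n → ℝ,
      (∀ i, |δ i| ≤ ε₁) ∧ y = fun i => c * x i + δ i }


/-! Let `M` be the supremum of the `i`-th coordinates over `S`. Points of `t_add(S)` have `i`-th
coordinate at most `M + ε₁`, points of `t_func(S)` at most `(1 + ε₂) M`, and the hypothesis gives
`M + ε₁ < (1 + ε₂) M`. Scaling a point of `S` whose `i`-th coordinate is within `ε₁ / (1 + ε₂)` of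
`M` by `1 + ε₂` and shifting every coordinate by `ε₁` produces a point of `t_combined(S)` whose
`i`-th coordinate exceeds `(1 + ε₂) M`. -/

variable {n : ℕ} {ε₁ ε₂ M : ℝ} {S : Set (Fin n → ℝ)}

theorem tAdd_subset_tCombined (hε₂ : 0 ≤ ε₂) : tAdd n ε₁ S ⊆ tCombined n ε₁ ε₂ S := by
  rintro y ⟨x, hx, δ, hδ, rfl⟩
  refine ⟨x, hx, 1, ⟨by linarith, by linarith⟩, δ, fun j => ?_, by simp⟩
  simpa only [Real.norm_eq_abs] using (norm_le_pi_norm δ j).trans hδ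

theorem tFunc_subset_tCombined (hε₁ : 0 ≤ ε₁) : tFunc n ε₂ S ⊆ tCombined n ε₁ ε₂ S := by
  rintro y ⟨x, hx, c, hc, rfl⟩
  exact ⟨x, hx, c, hc, 0, fun _ => by simpa using hε₁, by simp⟩

theorem apply_le_of_mem_tAdd {i : Fin n} (hM : M ∈ upperBounds ((· i) '' S)) {y : Fin n → ℝ}
    (hy : y ∈ tAdd n ε₁ S) : y i ≤ M + ε₁ := by
  obtain ⟨x, hx, δ, hδ, rfl⟩ := hy
  have hδi : δ i ≤ ε₁ := (le_abs_self _).trans <| (norm_le_pi_norm δ i).trans hδ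
  exact add_le_add (hM ⟨x, hx, rfl⟩) hδi

theorem apply_le_of_mem_tFunc {i : Fin n} (hS : ∀ x ∈ S, 0 ≤ x i)
    (hM : M ∈ upperBounds ((· i) '' S)) {y : Fin n → ℝ} (hy : y ∈ tFunc n ε₂ S) :
    y i ≤ (1 + ε₂) * M := by
  obtain ⟨x, hx, c, ⟨hc₁, hc₂⟩, rfl⟩ := hy
  calc c * x i ≤ (1 + ε₂) * x i := mul_le_mul_of_nonneg_right hc₂ (hS x hx)
    _ ≤ (1 + ε₂) * M := mul_le_mul_of_nonneg_left (hM ⟨x, hx, rfl⟩) (by linarith)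

theorem exists_mem_tCombined_lt_apply {i : Fin n} (hε₁ : 0 < ε₁) (hε₂ : 0 ≤ ε₂)
    (hM : IsLUB ((· i) '' S) M) : ∃ y ∈ tCombined n ε₁ ε₂ S, (1 + ε₂) * M < y i := by
  have hε₂' : 0 < 1 + ε₂ := by linarith
  obtain ⟨_, ⟨x, hx, rfl⟩, hxi, -⟩ :=
    hM.exists_between (sub_lt_self M (div_pos hε₁ hε₂'))
  refine ⟨fun j => (1 + ε₂) * x j + ε₁,
    ⟨x, hx, 1 + ε₂, ⟨by linarith, le_rfl⟩, fun _ => ε₁, fun _ => (abs_of_pos hε₁).le, rfl⟩, ?_⟩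
  have := mul_lt_mul_of_pos_left hxi hε₂'
  rw [mul_sub, mul_div_cancel₀ _ hε₂'.ne'] at this
  dsimp only
  linarith

theorem combined_strict_superset_general (n : ℕ) (ε₁ ε₂ : ℝ)
    (hε₁ : 0 < ε₁) (hε₂ : ε₁ < ε₂)
    (S : Set (Fin n → ℝ)) (hS : ∀ x ∈ S, ∀ i, x i ∈ Set.Icc (0 : ℝ) 1)
    (hx : ∃ x ∈ S, ∃ i, x i > ε₁ / ε₂) :
    (∃ y : Fin n → ℝ, y ∈ tCombined n ε₁ ε₂ S ∧
      y ∉ tAdd n ε₁ S ∪ tFunc n ε₂ S) ∧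
    tAdd n ε₁ S ∪ tFunc n ε₂ S ⊂ tCombined n ε₁ ε₂ S := by
  obtain ⟨x, hxS, i, hxi⟩ := hx
  have hε₂pos : 0 < ε₂ := hε₁.trans hε₂
  have hbdd : BddAbove ((· i) '' S) := ⟨1, by rintro _ ⟨z, hz, rfl⟩; exact (hS z hz i).2⟩
  set M := sSup ((· i) '' S)
  have hM : IsLUB ((· i) '' S) M := isLUB_csSup ⟨x i, x, hxS, rfl⟩ hbdd
  have hεM : ε₁ < ε₂ * M :=
    (div_lt_iff₀' hε₂pos).1 (hxi.trans_le (hM.1 ⟨x, hxS, rfl⟩))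
  obtain ⟨y, hy, hyi⟩ := exists_mem_tCombined_lt_apply hε₁ hε₂pos.le hM
  have hy_notMem : y ∉ tAdd n ε₁ S ∪ tFunc n ε₂ S := by
    rintro (hadd | hfunc)
    · linarith [apply_le_of_mem_tAdd hM.1 hadd]
    · linarith [apply_le_of_mem_tFunc (fun z hz => (hS z hz i).1) hM.1 hfunc]
  have hsub : tAdd n ε₁ S ∪ tFunc n ε₂ S ⊆ tCombined n ε₁ ε₂ S :=
    Set.union_subset (tAdd_subset_tCombined hε₂pos.le) (tFunc_subset_tCombined hε₁.le)
  exact ⟨⟨y, hy, hy_notMem⟩, (Set.ssubset_iff_of_subset hsub).2 ⟨y, hy, hy_notMem⟩⟩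

/-- If `n ≥ 2`, `ε₂ > ε₁ > 0`, `S ⊆ [0,1]^n`, and `S` contains an image with a
coordinate exceeding `ε₁ / ε₂`, then there is an adversarial example allowed by
the combined threat model but by neither constituent threat model; hence the
combined threat model is a strict superset of their union. -/
theorem combined_strict_superset (n : ℕ) (hn : 2 ≤ n) (ε₁ ε₂ : ℝ)
    (hε₁ : 0 < ε₁) (hε₂ : ε₁ < ε₂)
    (S : Set (Fin n → ℝ)) (hS : ∀ x ∈ S, ∀ i, x i ∈ Set.Icc (0 : ℝ) 1)
    (hx : ∃ x ∈ S, ∃ i, x i > ε₁ / ε₂) :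
    (∃ y : Fin n → ℝ, y ∈ tCombined n ε₁ ε₂ S ∧
      y ∉ tAdd n ε₁ S ∪ tFunc n ε₂ S) ∧
    tAdd n ε₁ S ∪ tFunc n ε₂ S ⊂ tCombined n ε₁ ε₂ S :=
  combined_strict_superset_general n ε₁ ε₂ hε₁ hε₂ S hS hx
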